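/- If a 2-counter Minsky machine has an infinite computation from its initial configuration, then there exists a set of traces T (over an alphabet encoding configurations, transitions, and guess markers) satisfying: (1) T contains a trace encoding the initial configuration (initial state, both counters zero); and (2) for every trace in T encoding a configuration and a valid transition of the machine, T contains a trace encoding the successor configuration determined by that transition. Conversely, if such a T exists with an initial trace, the machine has an infinite computation. -/
import Mathlib


/-- Counter operations of a 2-counter Minsky machine. -/
inductive Op : Type
  | inc | dec | isZero

/-- A 2-counter Minsky machine: states `Q`, transitions `Δ` (counter indexed by
`Bool`: `false` = counter 1, `true` = counter 2), initial state `init`. -/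
structure Minsky (Q : Type) where
  Δ : Set (Q × Bool × Op × Q)
  init : Q

/-- A configuration: state and the two counter values. -/
abbrev Config (Q : Type) := Q × ℕ × ℕ

/-- Effect of an operation on a counter value. -/
def opStep : Op → ℕ → ℕ → Prop
  | .inc, n, n' => n' = n + 1
  | .dec, n, n' => 0 < n ∧ n' = n - 1
  | .isZero, n, n' => n = 0 ∧ n' = 0

/-- The transition `δ` takes configuration `c` to configuration `c'`. -/
def stepTo {Q : Type} (δ : Q × Bool × Op × Q) (c c' : Config Q) : Prop :=
  δ.1 = c.1 ∧ δ.2.2.2 = c'.1 ∧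
    (if δ.2.1 then opStep δ.2.2.1 c.2.2 c'.2.2 ∧ c.2.1 = c'.2.1
     else opStep δ.2.2.1 c.2.1 c'.2.1 ∧ c.2.2 = c'.2.2)

/-- The alphabet encoding configurations and transitions. -/
inductive Letter (Q : Type) : Type
  | st : Q → Letter Q            -- current state
  | mem1 | mem2               -- unary counters
  | from_ : Q → Letter Q         -- transition source
  | to_ : Q → Letter Q           -- transition target
  | toC : Bool → Letter Q        -- which counter is updated
  | op : Op → Letter Q           -- the operation

/-- Traces over the encoding alphabet. -/
abbrev MTrace (Q : Type) := ℕ → Letter Q → Bool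

/-- `τ` encodes the configuration `(q, n₁, n₂)`: `q` is true everywhere and the
counters are represented in unary. -/
def encodesConfig {Q : Type} (τ : MTrace Q) : Config Q → Prop
  | (q, n₁, n₂) =>
    (∀ i q', τ i (.st q') = true ↔ q' = q) ∧
    (∀ i, τ i .mem1 = true ↔ i < n₁) ∧
    (∀ i, τ i .mem2 = true ↔ i < n₂)

/-- `τ` encodes the transition `(q, c, o, q')` (constantly). -/
def encodesTrans {Q : Type} (τ : MTrace Q) : Q × Bool × Op × Q → Prop
  | (q, c, o, q') =>
    (∀ i p, τ i (.from_ p) = true ↔ p = q) ∧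
    (∀ i p, τ i (.to_ p) = true ↔ p = q') ∧
    (∀ i b, τ i (.toC b) = true ↔ b = c) ∧
    (∀ i o', τ i (.op o') = true ↔ o' = o)

open Classical in
/-- Canonical trace encoding a configuration and a transition. -/
noncomputable def encT {Q : Type} (cfg : Config Q) (δ : Q × Bool × Op × Q) : MTrace Q :=
  fun i l => match l with
  | .st q' => decide (q' = cfg.1)
  | .mem1 => decide (i < cfg.2.1)
  | .mem2 => decide (i < cfg.2.2)
  | .from_ p => decide (p = δ.1)
  | .to_ p => decide (p = δ.2.2.2)
  | .toC b => decide (b = δ.2.1)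
  | .op o' => decide (o' = δ.2.2.1)

lemma encT_config {Q : Type} (cfg : Config Q) (δ : Q × Bool × Op × Q) :
    encodesConfig (encT cfg δ) cfg := by
  obtain ⟨q, n₁, n₂⟩ := cfg
  refine ⟨fun i q' => ?_, fun i => ?_, fun i => ?_⟩ <;> simp [encT]

lemma encT_trans {Q : Type} (cfg : Config Q) (δ : Q × Bool × Op × Q) :
    encodesTrans (encT cfg δ) δ := by
  obtain ⟨q, c, o, q'⟩ := δ
  refine ⟨fun i p => ?_, fun i p => ?_, fun i b => ?_, fun i o' => ?_⟩ <;> simp [encT]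

lemma encodesConfig_unique {Q : Type} {τ : MTrace Q} {c c' : Config Q}
    (h : encodesConfig τ c) (h' : encodesConfig τ c') : c = c' := by
  obtain ⟨q, n₁, n₂⟩ := c
  obtain ⟨q', n₁', n₂'⟩ := c'
  obtain ⟨h1, h2, h3⟩ := h
  obtain ⟨h1', h2', h3'⟩ := h'
  have hq : q = q' := (h1' 0 q).mp ((h1 0 q).mpr rfl)
  have hn1 : n₁ = n₁' := by
    have := fun i => ((h2 i).symm.trans (h2' i))
    by_contra hne
    rcases Nat.lt_or_ge n₁ n₁' with hl | hl
    · exact absurd ((this n₁).mpr hl) (by omega)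
    · rcases Nat.lt_or_ge n₁' n₁ with hl' | hl'
      · exact absurd ((this n₁').mp hl') (by omega)
      · omega
  have hn2 : n₂ = n₂' := by
    have := fun i => ((h3 i).symm.trans (h3' i))
    by_contra hne
    rcases Nat.lt_or_ge n₂ n₂' with hl | hl
    · exact absurd ((this n₂).mpr hl) (by omega)
    · rcases Nat.lt_or_ge n₂' n₂ with hl' | hl'
      · exact absurd ((this n₂').mp hl') (by omega)
      · omega
  simp [hq, hn1, hn2]

/-- Semantic core of the undecidability reduction (Theorem 16): a 2-counter
Minsky machine has an infinite computation from its initial configuration iff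
there exists a set of traces containing a trace encoding the initial
configuration, in which every trace encodes a configuration together with a
valid transition of the machine applicable to it, and the successor
configuration determined by that transition is encoded by some trace of the
set. -/
theorem minsky_infinite_computation_iff_trace_set {Q : Type} (M : Minsky Q) :
    (∃ ρ : ℕ → Config Q, ρ 0 = (M.init, 0, 0) ∧
        ∀ i, ∃ δ ∈ M.Δ, stepTo δ (ρ i) (ρ (i + 1))) ↔
    (∃ T : Set (MTrace Q),
        (∃ τ ∈ T, encodesConfig τ (M.init, 0, 0)) ∧
        (∀ τ ∈ T, ∃ cfg δ, δ ∈ M.Δ ∧ encodesConfig τ cfg ∧ encodesTrans τ δ ∧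
            ∃ cfg', stepTo δ cfg cfg' ∧ ∃ τ' ∈ T, encodesConfig τ' cfg')) := by
  constructor
  · rintro ⟨ρ, h0, hstep⟩
    choose δ hδ hst using hstep
    refine ⟨Set.range (fun i => encT (ρ i) (δ i)), ⟨encT (ρ 0) (δ 0), ⟨0, rfl⟩, ?_⟩, ?_⟩
    · rw [← h0]; exact encT_config _ _
    · rintro τ ⟨i, rfl⟩
      exact ⟨ρ i, δ i, hδ i, encT_config _ _, encT_trans _ _, ρ (i+1), hst i,
        encT (ρ (i+1)) (δ (i+1)), ⟨i+1, rfl⟩, encT_config _ _⟩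
  · rintro ⟨T, ⟨τ₀, hτ₀T, hτ₀⟩, hT⟩
    -- pairs of a trace in T and a config it encodes
    let P := {p : MTrace Q × Config Q // p.1 ∈ T ∧ encodesConfig p.1 p.2}
    have hnext : ∀ p : P, ∃ p' : P, ∃ δ ∈ M.Δ, stepTo δ p.1.2 p'.1.2 := by
      rintro ⟨⟨τ, cfg⟩, hτT, henc⟩
      obtain ⟨cfg₀, δ, hδ, henc₀, -, cfg', hstep, τ', hτ'T, henc'⟩ := hT τ hτT
      have : cfg₀ = cfg := encodesConfig_unique henc₀ henc
      subst this
      exact ⟨⟨⟨τ', cfg'⟩, hτ'T, henc'⟩, δ, hδ, hstep⟩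
    choose f δf hδf hstf using hnext
    let p0 : P := ⟨⟨τ₀, (M.init, 0, 0)⟩, hτ₀T, hτ₀⟩
    refine ⟨fun n => (f^[n] p0).1.2, by simp [p0], fun i => ?_⟩
    refine ⟨δf (f^[i] p0), hδf _, ?_⟩
    show stepTo _ (f^[i] p0).1.2 (f^[i+1] p0).1.2
    rw [Function.iterate_succ_apply' f i p0]
    exact hstf _
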